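/- Let (I, ≼) be a finite partially ordered set, let P : I → ℝ be strictly positive, and let L' : I → I → ℝ satisfy L'_{ij} > 0 for all j ≼ i. Then the system of equations ∑_{j ≼ i} (x_i − L'_{ij}) · x_j · P_j = 0 (for all i ∈ I) has a unique solution x : I → ℝ with all x_i > 0. -/

import Mathlib

/-!
Once the coordinates `x j` with `j < i` are known and positive, the equation at `i` is the
quadratic
  `P i * t ^ 2 + (∑_{j < i} x j * P j - L' i i * P i) * t = ∑_{j < i} L' i j * x j * P j`
in `t = x i`. Its right side is nonnegative, and it is positive unless `i` is minimal, in which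
case the linear coefficient is negative; either way the quadratic has exactly one positive root.
Well-founded recursion on the finite poset therefore determines the solution one coordinate at a
time, and well-founded induction shows that every positive solution agrees with it.
-/

open Finset

noncomputable def posRoot (a b c : ℝ) : ℝ := (-b + √(b ^ 2 + 4 * a * c)) / (2 * a)

theorem pos_and_quadratic_eq_iff {a b c t : ℝ} (ha : 0 < a) (hc : 0 ≤ c)
    (hbc : 0 < c ∨ b < 0) : 0 < t ∧ a * t ^ 2 + b * t = c ↔ t = posRoot a b c := by
  set s := √(b ^ 2 + 4 * a * c)
  have hs : discrim a b (-c) = s * s := by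
    rw [Real.mul_self_sqrt (by positivity), discrim]; ring
  have hbs : |b| ≤ s := Real.abs_le_sqrt (by nlinarith)
  have hbs' : b < s := by
    rcases hbc with hc | hb
    · have : |b| < s := by rw [Real.lt_sqrt (abs_nonneg b), sq_abs]; nlinarith
      linarith [le_abs_self b]
    · linarith [neg_le_abs b]
  rw [← sub_eq_zero, show a * t ^ 2 + b * t - c = a * (t * t) + b * t + -c by ring,
    quadratic_eq_zero_iff ha.ne' hs]
  constructor
  · rintro ⟨ht, h | h⟩
    · exact h
    · have : (-b - s) / (2 * a) ≤ 0 :=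
        div_nonpos_of_nonpos_of_nonneg (by linarith [neg_abs_le b]) (by positivity)
      linarith
  · rintro rfl
    exact ⟨div_pos (by linarith) (by positivity), Or.inl rfl⟩

section Poset

variable {I : Type*} [Fintype I] [PartialOrder I] [DecidableRel ((· ≤ ·) : I → I → Prop)]

attribute [local instance] decidableLTOfDecidableLE

theorem sum_filter_le_eq_add_sum_filter_lt {M : Type*} [AddCommMonoid M] (f : I → M) (i : I) :
    ∑ j ∈ univ.filter (· ≤ i), f j = f i + ∑ j ∈ univ.filter (· < i), f j := by
  have : univ.filter (· ≤ i) = (univ.filter (· < i)).cons i (by simp) := by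
    ext j
    simp [le_iff_lt_or_eq, or_comm]
  rw [this, sum_cons]

variable {P : I → ℝ} {L' : I → I → ℝ}

theorem sum_filter_le_eq_zero_iff (x : I → ℝ) (i : I) :
    ∑ j ∈ univ.filter (· ≤ i), (x i - L' i j) * x j * P j = 0 ↔
      P i * x i ^ 2 + (∑ j ∈ univ.filter (· < i), x j * P j - L' i i * P i) * x i =
        ∑ j ∈ univ.filter (· < i), L' i j * x j * P j := by
  have hsplit : ∑ j ∈ univ.filter (· < i), (x i - L' i j) * x j * P j =
      x i * ∑ j ∈ univ.filter (· < i), x j * P j -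
        ∑ j ∈ univ.filter (· < i), L' i j * x j * P j := by
    rw [mul_sum, ← sum_sub_distrib]
    exact sum_congr rfl fun j _ => by ring
  rw [sum_filter_le_eq_add_sum_filter_lt, hsplit]
  constructor <;> intro h <;> linear_combination h

theorem pos_and_sum_filter_le_eq_zero_iff (hP : ∀ i, 0 < P i)
    (hL' : ∀ i j, j ≤ i → 0 < L' i j) {x : I → ℝ} {i : I} (hx : ∀ j < i, 0 < x j) :
    (0 < x i ∧ ∑ j ∈ univ.filter (· ≤ i), (x i - L' i j) * x j * P j = 0) ↔
      x i = posRoot (P i) (∑ j ∈ univ.filter (· < i), x j * P j - L' i i * P i)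
        (∑ j ∈ univ.filter (· < i), L' i j * x j * P j) := by
  have hterm : ∀ j ∈ univ.filter (· < i), 0 < L' i j * x j * P j := fun j hj => by
    have hji := (mem_filter.1 hj).2
    have := hL' i j hji.le
    have := hx j hji
    have := hP j
    positivity
  have hc := sum_nonneg fun j hj => (hterm j hj).le
  have hbc : 0 < ∑ j ∈ univ.filter (· < i), L' i j * x j * P j ∨
      ∑ j ∈ univ.filter (· < i), x j * P j - L' i i * P i < 0 := by
    rcases (univ.filter (· < i)).eq_empty_or_nonempty with hmin | hne
    · right
      rw [hmin, sum_empty, zero_sub, neg_lt_zero]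
      exact mul_pos (hL' i i le_rfl) (hP i)
    · exact Or.inl (sum_pos hterm hne)
  rw [sum_filter_le_eq_zero_iff, pos_and_quadratic_eq_iff (hP i) hc hbc]

variable (P L') in
noncomputable def sbicSolution : I → ℝ :=
  WellFoundedLT.fix fun i x =>
    posRoot (P i)
      (∑ j ∈ (univ.filter (· < i)).attach, x j (mem_filter.1 j.2).2 * P j - L' i i * P i)
      (∑ j ∈ (univ.filter (· < i)).attach, L' i j * x j (mem_filter.1 j.2).2 * P j)

theorem sbicSolution_apply (i : I) :
    sbicSolution P L' i =
      posRoot (P i) (∑ j ∈ univ.filter (· < i), sbicSolution P L' j * P j - L' i i * P i)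
        (∑ j ∈ univ.filter (· < i), L' i j * sbicSolution P L' j * P j) := by
  rw [← sum_attach _ fun j => sbicSolution P L' j * P j,
    ← sum_attach _ fun j => L' i j * sbicSolution P L' j * P j]
  exact WellFoundedLT.fix_eq _ i

theorem sbicSolution_pos_and_eq_zero (hP : ∀ i, 0 < P i) (hL' : ∀ i j, j ≤ i → 0 < L' i j)
    (i : I) : 0 < sbicSolution P L' i ∧
      ∑ j ∈ univ.filter (· ≤ i),
        (sbicSolution P L' i - L' i j) * sbicSolution P L' j * P j = 0 := by
  induction i using WellFoundedLT.induction with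
  | ind i ih =>
    exact (pos_and_sum_filter_le_eq_zero_iff hP hL' fun j hj => (ih j hj).1).2
      (sbicSolution_apply i)

theorem eq_sbicSolution (hP : ∀ i, 0 < P i) (hL' : ∀ i j, j ≤ i → 0 < L' i j) {x : I → ℝ}
    (hx : ∀ i, 0 < x i)
    (heq : ∀ i, ∑ j ∈ univ.filter (· ≤ i), (x i - L' i j) * x j * P j = 0) :
    x = sbicSolution P L' := by
  funext i
  induction i using WellFoundedLT.induction with
  | ind i ih =>
    have hsum (f : I → ℝ → ℝ) : ∑ j ∈ univ.filter (· < i), f j (x j) =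
        ∑ j ∈ univ.filter (· < i), f j (sbicSolution P L' j) :=
      sum_congr rfl fun j hj => by rw [ih j (mem_filter.1 hj).2]
    rw [(pos_and_sum_filter_le_eq_zero_iff hP hL' fun j _ => hx j).1 ⟨hx i, heq i⟩,
      sbicSolution_apply, hsum fun j t => t * P j, hsum fun j t => L' i j * t * P j]

end Poset

theorem stmt_2_general {I : Type*} [Fintype I] [PartialOrder I]
    [DecidableRel ((· ≤ ·) : I → I → Prop)]
    (P : I → ℝ) (hP : ∀ i, 0 < P i)
    (L' : I → I → ℝ) (hL' : ∀ i j, j ≤ i → 0 < L' i j) :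
    ∃! x : I → ℝ, (∀ i, 0 < x i) ∧
      ∀ i, ∑ j ∈ Finset.univ.filter (· ≤ i), (x i - L' i j) * x j * P j = 0 :=
  ⟨sbicSolution P L', ⟨fun i => (sbicSolution_pos_and_eq_zero hP hL' i).1,
    fun i => (sbicSolution_pos_and_eq_zero hP hL' i).2⟩,
    fun _ ⟨hx, heq⟩ => eq_sbicSolution hP hL' hx heq⟩

/-- The singular BIC equation system over a finite poset has a unique solution with all
coordinates positive. -/
theorem stmt_2 {I : Type*} [Fintype I] [PartialOrder I] [DecidableEq I]
    [DecidableRel ((· ≤ ·) : I → I → Prop)]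
    (P : I → ℝ) (hP : ∀ i, 0 < P i)
    (L' : I → I → ℝ) (hL' : ∀ i j, j ≤ i → 0 < L' i j) :
    ∃! x : I → ℝ, (∀ i, 0 < x i) ∧
      ∀ i, ∑ j ∈ Finset.univ.filter (· ≤ i), (x i - L' i j) * x j * P j = 0 :=
  stmt_2_general P hP L' hL'
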